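/- Let N = 2n+2 and let T ⪯ P be type D Schubert symbols with t(T) ≠ t(P). Suppose c ∈ [1,n] satisfies: c ∉ [T] and [c+1, n+1] ⊆ [P] ∩ [T] ∩ [P̃], where P̃ is the modified type D construction. Then c ∉ [P] ∩ [P̃]. -/

import Mathlib

open scoped Classical

/-- `p : ℕ → ℕ` encodes a Schubert symbol `{p 1 < … < p m} ⊆ [1,N]`
with the conventions `p 0 = 0` and `p (m+1) = N+1`, and the isotropic
condition that no two elements sum to `N+1`. -/
structure IsSSym (N m : ℕ) (p : ℕ → ℕ) : Prop where
  zero : p 0 = 0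
  top : p (m+1) = N+1
  mono : ∀ i j, i < j → j ≤ m+1 → p i < p j
  ub : ∀ i, 1 ≤ i → i ≤ m → p i ≤ N
  iso : ∀ i j, 1 ≤ i → i ≤ m → 1 ≤ j → j ≤ m → p i + p j ≠ N+1

/-- The underlying set `{p 1, …, p m}` of a Schubert symbol. -/
def symSet (m : ℕ) (p : ℕ → ℕ) : Finset ℕ := (Finset.Icc 1 m).image p

/-- Componentwise order `t_i ≤ p_i` on Schubert symbols. -/
def leS (m : ℕ) (t p : ℕ → ℕ) : Prop := ∀ i, 1 ≤ i → i ≤ m → t i ≤ p i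

/-- `c` is a visible cut of the Richardson diagram `D(P,T)`:
`p_i ≤ c < t_{i+1}` for some `0 ≤ i ≤ m`. -/
def visCut (m : ℕ) (p t : ℕ → ℕ) (c : ℕ) : Prop :=
  ∃ i, i ≤ m ∧ p i ≤ c ∧ c < t (i+1)

/-- `c` is an apparent cut of `D(P,T)`: `c` or `N−c` is a visible cut. -/
def appCut (N m : ℕ) (p t : ℕ → ℕ) (c : ℕ) : Prop :=
  visCut m p t c ∨ visCut m p t (N - c)

/-- `c` is a zero column of `D(P,T)`: `p_j < c < t_{j+1}` for some `j`. -/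
def zeroCol (m : ℕ) (p t : ℕ → ℕ) (c : ℕ) : Prop :=
  ∃ j, j ≤ m ∧ p j < c ∧ c < t (j+1)

/-- `(j,c)` is a lone star of `D(P,T)` with respect to the cut predicate `cut`. -/
def loneStar (m : ℕ) (p t : ℕ → ℕ) (cut : ℕ → Prop) (j c : ℕ) : Prop :=
  1 ≤ j ∧ j ≤ m ∧ t j ≤ c ∧ c ≤ p j ∧
    ((c = t j ∧ cut c) ∨ (c = p j ∧ cut (c-1)))

/-- `c ∈ 𝓛_{P,T}` : `c` is a zero column, or column `N+1−c` contains a lone star. -/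
def LSet (N m : ℕ) (p t : ℕ → ℕ) (cut : ℕ → Prop) (c : ℕ) : Prop :=
  1 ≤ c ∧ c ≤ N ∧
    (zeroCol m p t c ∨ ∃ j, loneStar m p t cut j (N+1-c))

/-- `[P] = P ∪ {N+1−p : p ∈ P}`. -/
def brP (N : ℕ) (P : Finset ℕ) : Finset ℕ := P ∪ P.image (fun p => N+1-p)

/-- The type-`D` type function `t(P) ∈ {0,1,2}`: if `n+1 ∈ [P]` it is the parity of
`#([1,n+1] \ P)`; otherwise it is `2`. -/
def tD (n : ℕ) (P : Finset ℕ) : ℕ :=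
  if (n+1) ∈ P ∨ (n+2) ∈ P then (Finset.Icc 1 (n+1) \ P).card % 2 else 2

/-- The type-`D` Bruhat order `T ⪯ P` on Schubert symbols for `OG(m, 2n+2)`. -/
def bruhatD (n m : ℕ) (t p : ℕ → ℕ) : Prop :=
  leS m t p ∧ ∀ c, 1 ≤ c → c ≤ n →
    Finset.Icc (c+1) (n+1) ⊆ brP (2*n+2) (symSet m p) →
    Finset.Icc (c+1) (n+1) ⊆ brP (2*n+2) (symSet m t) →
    ((symSet m p) ∩ Finset.Icc 1 c).card = ((symSet m t) ∩ Finset.Icc 1 c).card →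
    tD n (symSet m p) = tD n (symSet m t)

/-- The exceptional center cut `n+1` exists in `D(P,T)`:
`p_i = n+2 ≤ t_{i+1}` or `t_i = n+1 ≥ p_{i−1}` for some `i`. -/
def centerCut (n m : ℕ) (p t : ℕ → ℕ) : Prop :=
  ∃ i, 1 ≤ i ∧ i ≤ m ∧
    ((p i = n+2 ∧ n+2 ≤ t (i+1)) ∨ (t i = n+1 ∧ p (i-1) ≤ n+1))

/-- `c ∈ [1,n]` is a cut candidate of `D(P,T)`:
`[c+1,n+1] ⊆ [P] ∩ [T]` and `#(T ∩ [1,c]) = #(P ∩ [1,c]) + 1`. -/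
def cutCandidate (n m : ℕ) (p t : ℕ → ℕ) (c : ℕ) : Prop :=
  1 ≤ c ∧ c ≤ n ∧
  Finset.Icc (c+1) (n+1) ⊆ brP (2*n+2) (symSet m p) ∧
  Finset.Icc (c+1) (n+1) ⊆ brP (2*n+2) (symSet m t) ∧
  ((symSet m t) ∩ Finset.Icc 1 c).card = ((symSet m p) ∩ Finset.Icc 1 c).card + 1

/-- Exceptional cuts of `D(P,T)` in type `D`. -/
def excCut (n m : ℕ) (p t : ℕ → ℕ) (c : ℕ) : Prop :=
  (centerCut n m p t ∧ c = n+1) ∨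
  (tD n (symSet m t) ≠ tD n (symSet m p) ∧
    ∃ d, cutCandidate n m p t d ∧ (c = d ∨ c = 2*n+2 - d))

/-- The type-`D` cut set: apparent cuts together with exceptional cuts. -/
def cutD (n m : ℕ) (p t : ℕ → ℕ) (c : ℕ) : Prop :=
  appCut (2*n+2) m p t c ∨ excCut n m p t c

/-- The construction of the Schubert symbol `P'` from `T ⪯ P` in types `B` and `C`. -/
noncomputable def Pp (N m : ℕ) (p t : ℕ → ℕ) (i : ℕ) : ℕ :=
  if p i < t (i+1) then p i
  else if ¬ appCut N m p t (t (i+1) - 1) then t (i+1)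
  else ((Finset.Icc (t i) (t (i+1) - 1)).filter
        (fun c => ¬ LSet N m p t (appCut N m p t) c)).sup id

/-- The modified construction of the Schubert symbol `P̃` from `T ⪯ P` in type `D`. -/
noncomputable def Ptil (n m : ℕ) (p t : ℕ → ℕ) (i : ℕ) : ℕ :=
  if p i < t (i+1) then p i
  else if ¬ cutD n m p t (t (i+1) - 1) then
    (if t (i+1) = n+1 ∨ t (i+1) = n+2 then 2*n+3 - t (i+1) else t (i+1))
  else ((Finset.Icc (t i) (t (i+1) - 1)).filter
        (fun c => ¬ LSet (2*n+2) m p t (cutD n m p t) c)).sup id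

/-- A critical window `[c+1, N−c]` in `D(P,T)` (type `D`, defined when `t(T) ≠ t(P)`):
`c` and `N−c` are visible cuts and `[c+1,n+1] ⊆ [T] ∩ [P]`. -/
def critWindow (n m : ℕ) (p t : ℕ → ℕ) (c : ℕ) : Prop :=
  c ≤ n ∧ tD n (symSet m t) ≠ tD n (symSet m p) ∧
  visCut m p t c ∧ visCut m p t (2*n+2 - c) ∧
  Finset.Icc (c+1) (n+1) ⊆ brP (2*n+2) (symSet m t) ∧
  Finset.Icc (c+1) (n+1) ⊆ brP (2*n+2) (symSet m p)

/-- The quadratic form `f_c = x_1 x_N + … + x_c x_{N+1−c}`. -/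
noncomputable def fquad (N : ℕ) (c : ℕ) (x : ℕ → ℂ) : ℂ := ∑ i ∈ Finset.Icc 1 c, x i * x (N+1-i)

/-- The variety `Z_{P,T}` (affine cone) cut out by quadratic equations `f_c = 0`
for `c` in a prescribed set `Q` and linear equations `x_c = 0` for `c ∈ 𝓛_{P,T}`. -/
def Zvar (N m : ℕ) (p t : ℕ → ℕ) (Q : ℕ → Prop) (cut : ℕ → Prop) : Set (ℕ → ℂ) :=
  {x | (∀ c, Q c → fquad N c x = 0) ∧ ∀ c, LSet N m p t cut c → x c = 0}

/-!
Let `A = #(T ∩ [1,c])` and `A₂ = #(T ∩ [1,N-c])` (`countLE m t c` and `countLE m t (N-c)`).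
Since `[c+1,n+1] ⊆ [P] ∩ [T]`, both `P` and `T` contain exactly one element of each pair
`{e, N+1-e}` with `c < e ≤ n+1`, so `A₂ = A + (n+1-c)`; and `t(T) ≠ t(P)` together with `T ⪯ P`
forces `#(P ∩ [1,x]) < #(T ∩ [1,x])` for `c ≤ x ≤ n`, so `D(P,T)` has no visible cut there.

If also `c ∈ [P̃]`, each of the `n+2-c` pairs `{e, N+1-e}`, `c ≤ e ≤ n+1`, is met by a row of `P̃`
lying in `[A, A₂]`, so rows `A` and `A₂` meet different pairs. At row `A₂` this forces
`p̃_{A₂} = p_{A₂} = N+1-c`, which gives `#(T ∩ [1,c]) = #(P ∩ [1,c]) + 1`; then every `x ∈ [c,n]`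
below `t_{A+1}` is a cut candidate, so `x` and `N-x` are exceptional cuts. With these cuts, each
case of the definition of `p̃_A` either contradicts the case condition or puts `p̃_A` into
`𝓛_{P,T}`, so row `A` meets no pair `e > c`.
-/

lemma IsSSym.strictMonoOn {N m : ℕ} {p : ℕ → ℕ} (hp : IsSSym N m p) :
    StrictMonoOn p (Set.Iic (m+1)) :=
  fun i _ j hj hij => hp.mono i j hij hj

lemma StrictMonoOn.add_sub_le {m : ℕ} {p : ℕ → ℕ} (hp : StrictMonoOn p (Set.Iic (m+1)))
    {i j : ℕ} (hij : i ≤ j) (hj : j ≤ m+1) : p i + (j - i) ≤ p j := by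
  induction j, hij using Nat.le_induction with
  | base => simp
  | succ k hik ih =>
    have := hp (Set.mem_Iic.2 (show k ≤ m+1 by omega)) (Set.mem_Iic.2 hj)
      (lt_add_one k)
    have := ih (by omega)
    omega

lemma mapsTo_injOn_of_subset_image {α β : Type*} [DecidableEq β] {s : Finset α} {t : Finset β}
    {f : α → β} (hsub : t ⊆ s.image f) (hcard : s.card ≤ t.card) :
    Set.MapsTo f s t ∧ Set.InjOn f s := by
  have heq : t = s.image f :=
    Finset.eq_of_subset_of_card_le hsub (Finset.card_image_le.trans hcard)
  refine ⟨fun x hx => heq ▸ Finset.mem_image_of_mem f hx, Finset.card_image_iff.1 ?_⟩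
  exact le_antisymm Finset.card_image_le (heq ▸ hcard)

def countLE (m : ℕ) (p : ℕ → ℕ) (d : ℕ) : ℕ :=
  ((Finset.Icc 1 m).filter (fun j => p j ≤ d)).card

section countLE

variable {m : ℕ} {p : ℕ → ℕ}

lemma countLE_le (d : ℕ) : countLE m p d ≤ m := by
  simpa [countLE] using Finset.card_filter_le (Finset.Icc 1 m) (fun j => p j ≤ d)

lemma countLE_mono {d d' : ℕ} (h : d ≤ d') : countLE m p d ≤ countLE m p d' :=
  Finset.card_le_card fun j hj => by
    simp only [Finset.mem_filter] at hj ⊢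
    exact ⟨hj.1, hj.2.trans h⟩

lemma le_countLE_iff (hp : StrictMonoOn p (Set.Iic (m+1))) {d j : ℕ} (hj1 : 1 ≤ j)
    (hjm : j ≤ m) : j ≤ countLE m p d ↔ p j ≤ d := by
  constructor
  · intro hj
    by_contra! hd
    have hsub : (Finset.Icc 1 m).filter (fun i => p i ≤ d) ⊆ Finset.Icc 1 (j-1) := by
      intro i hi
      simp only [Finset.mem_filter, Finset.mem_Icc] at hi ⊢
      have : i < j :=
        (hp.lt_iff_lt (Set.mem_Iic.2 (by omega)) (Set.mem_Iic.2 (by omega))).1 (by omega)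
      omega
    have := Finset.card_le_card hsub
    simp only [Nat.card_Icc] at this
    unfold countLE at hj
    omega
  · intro hd
    have hsub : Finset.Icc 1 j ⊆ (Finset.Icc 1 m).filter (fun i => p i ≤ d) := by
      intro i hi
      simp only [Finset.mem_filter, Finset.mem_Icc] at hi ⊢
      exact ⟨⟨hi.1, hi.2.trans hjm⟩,
        ((hp.le_iff_le (Set.mem_Iic.2 (by omega)) (Set.mem_Iic.2 (by omega))).2 hi.2).trans hd⟩
    simpa [countLE] using Finset.card_le_card hsub

lemma countLE_eq (hp : StrictMonoOn p (Set.Iic (m+1))) {d k : ℕ} (hkm : k ≤ m)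
    (hk : 1 ≤ k → p k ≤ d) (hk' : d < p (k+1)) : countLE m p d = k := by
  have hlow : k ≤ countLE m p d := by
    rcases Nat.eq_zero_or_pos k with rfl | hk1
    · exact Nat.zero_le _
    · exact (le_countLE_iff hp hk1 hkm).2 (hk hk1)
  have hup : ¬ k + 1 ≤ countLE m p d := fun h =>
    absurd ((le_countLE_iff hp (by omega) (h.trans (countLE_le d))).1 h) (by omega)
  omega

lemma p_countLE_le (hp : StrictMonoOn p (Set.Iic (m+1))) {d : ℕ} (h : 1 ≤ countLE m p d) :
    p (countLE m p d) ≤ d :=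
  (le_countLE_iff hp h (countLE_le d)).1 le_rfl

lemma lt_p_countLE_succ (hp : StrictMonoOn p (Set.Iic (m+1))) {d : ℕ} (htop : d < p (m+1)) :
    d < p (countLE m p d + 1) := by
  by_cases h : countLE m p d + 1 ≤ m
  · by_contra! hd
    exact absurd ((le_countLE_iff hp (by omega) h).2 hd) (by omega)
  · rwa [show countLE m p d + 1 = m + 1 by have := countLE_le (m := m) (p := p) d; omega]

lemma countLE_succ_le (hp : StrictMonoOn p (Set.Iic (m+1))) (d : ℕ) :
    countLE m p (d+1) ≤ countLE m p d + 1 := by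
  by_contra! h
  set k := countLE m p (d+1)
  have hkm : k ≤ m := countLE_le _
  have hk : p k ≤ d + 1 := p_countLE_le hp (by omega)
  have hlt : p (k-1) < p k := hp (Set.mem_Iic.2 (by omega)) (Set.mem_Iic.2 (by omega)) (by omega)
  exact absurd ((le_countLE_iff hp (by omega) (by omega)).2 (by omega : p (k-1) ≤ d)) (by omega)

lemma card_symSet_inter_Icc (hp : StrictMonoOn p (Set.Iic (m+1))) (d : ℕ) :
    (symSet m p ∩ Finset.Icc 1 d).card = countLE m p d := by
  have hpos : ∀ j, 1 ≤ j → j ≤ m → 1 ≤ p j := fun j hj1 hjm => by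
    have := hp (Set.mem_Iic.2 (Nat.zero_le _)) (Set.mem_Iic.2 (show j ≤ m+1 by omega)) hj1
    omega
  have hset : symSet m p ∩ Finset.Icc 1 d =
      ((Finset.Icc 1 m).filter (fun j => p j ≤ d)).image p := by
    ext x
    simp only [symSet, Finset.mem_inter, Finset.mem_image, Finset.mem_filter, Finset.mem_Icc]
    constructor
    · rintro ⟨⟨j, hj, rfl⟩, -, hd⟩
      exact ⟨j, ⟨hj, hd⟩, rfl⟩
    · rintro ⟨j, ⟨hj, hd⟩, rfl⟩
      exact ⟨⟨j, hj, rfl⟩, hpos j hj.1 hj.2, hd⟩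
  rw [hset, Finset.card_image_of_injOn]
  · rfl
  · exact hp.injOn.mono fun j hj => by
      simp only [Finset.coe_filter, Finset.mem_Icc, Set.mem_ofPred_eq] at hj
      exact Set.mem_Iic.2 (by omega)

end countLE

lemma mem_brP_symSet_iff {N m e : ℕ} {q : ℕ → ℕ} (he1 : 1 ≤ e) (he : e ≤ N+1) :
    e ∈ brP N (symSet m q) ↔ ∃ j, 1 ≤ j ∧ j ≤ m ∧ (q j = e ∨ q j = N+1-e) := by
  simp only [brP, symSet, Finset.mem_union, Finset.mem_image, Finset.mem_Icc]
  constructor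
  · rintro (⟨j, hj, rfl⟩ | ⟨_, ⟨j, hj, rfl⟩, rfl⟩)
    · exact ⟨j, hj.1, hj.2, Or.inl rfl⟩
    · exact ⟨j, hj.1, hj.2, Or.inr (by omega)⟩
  · rintro ⟨j, hj1, hjm, rfl | h⟩
    · exact Or.inl ⟨j, ⟨hj1, hjm⟩, rfl⟩
    · exact Or.inr ⟨q j, ⟨j, ⟨hj1, hjm⟩, rfl⟩, by omega⟩

/-- If `[c+1, n+1] ⊆ [Q]`, the isotropic symbol `Q` meets `[c+1, N-c]` in exactly one element of
each pair `{e, N+1-e}`. -/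
lemma countLE_reflect {n m c : ℕ} {q : ℕ → ℕ} (hq : IsSSym (2*n+2) m q) (hcn : c ≤ n)
    (hwin : Finset.Icc (c+1) (n+1) ⊆ brP (2*n+2) (symSet m q)) :
    countLE m q (2*n+2-c) = countLE m q c + (n+1-c) := by
  set S := ((Finset.Icc 1 m).filter (fun j => q j ≤ 2*n+2-c)).filter (fun j => ¬ q j ≤ c)
  have hsplit : countLE m q (2*n+2-c) = countLE m q c + S.card := by
    rw [countLE, ← Finset.card_filter_add_card_filter_not (fun j => q j ≤ c),
      Finset.filter_filter, countLE]
    congr 3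
    ext j
    omega
  have hS : S.card = (Finset.Icc (c+1) (n+1)).card := by
    apply Finset.card_nbij (fun j => min (q j) (2*n+3 - q j))
    · intro j hj
      simp only [S, Finset.coe_filter, Finset.mem_filter, Set.mem_ofPred_eq] at hj
      simp only [Finset.coe_Icc, Set.mem_Icc]
      omega
    · intro i hi j hj hij
      simp only [S, Finset.coe_filter, Finset.mem_filter, Finset.mem_Icc,
        Set.mem_ofPred_eq] at hi hj
      have hiso := hq.iso i j hi.1.1.1 hi.1.1.2 hj.1.1.1 hj.1.1.2
      exact hq.strictMonoOn.injOn (Set.mem_Iic.2 (by omega)) (Set.mem_Iic.2 (by omega))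
        (by beta_reduce at hij; omega)
    · intro e he
      simp only [Finset.coe_Icc, Set.mem_Icc] at he
      obtain ⟨j, hj1, hjm, hj⟩ :=
        (mem_brP_symSet_iff (by omega) (by omega)).1 (hwin (Finset.mem_Icc.2 he))
      refine ⟨j, ?_, by beta_reduce; omega⟩
      simp only [S, Finset.coe_filter, Finset.mem_filter, Finset.mem_Icc, Set.mem_ofPred_eq]
      omega
  rw [hsplit, hS, Nat.card_Icc]
  omega

lemma tD_eq_of_countLE_eq {n m : ℕ} {p t : ℕ → ℕ} (hp : StrictMonoOn p (Set.Iic (m+1)))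
    (ht : StrictMonoOn t (Set.Iic (m+1))) (hP : n+1 ∈ symSet m p ∨ n+2 ∈ symSet m p)
    (hT : n+1 ∈ symSet m t ∨ n+2 ∈ symSet m t) (h : countLE m p (n+1) = countLE m t (n+1)) :
    tD n (symSet m p) = tD n (symSet m t) := by
  rw [tD, tD, if_pos hP, if_pos hT, Finset.card_sdiff, Finset.card_sdiff,
    card_symSet_inter_Icc hp, card_symSet_inter_Icc ht, h]

lemma countLE_eq_of_visCut {N m x : ℕ} {p t : ℕ → ℕ} (hp : IsSSym N m p) (ht : IsSSym N m t)
    (hle : leS m t p) (h : visCut m p t x) : countLE m p x = countLE m t x := by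
  obtain ⟨i, him, hpi, hti⟩ := h
  have hpi1 : x < p (i+1) := by
    rcases Nat.lt_or_ge i m with hi | hi
    · exact hti.trans_le (hle (i+1) (by omega) (by omega))
    · rw [show i = m by omega] at hti ⊢
      rwa [hp.top, ← ht.top]
  rw [countLE_eq hp.strictMonoOn him (fun _ => hpi) hpi1,
    countLE_eq ht.strictMonoOn him (fun hi => (hle i hi him).trans hpi) hti]

lemma countLE_le_countLE_of_leS {m d : ℕ} {p t : ℕ → ℕ} (hle : leS m t p) :
    countLE m p d ≤ countLE m t d :=
  Finset.card_le_card fun j hj => by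
    simp only [Finset.mem_filter, Finset.mem_Icc] at hj ⊢
    exact ⟨hj.1, (hle j hj.1.1 hj.1.2).trans hj.2⟩

section Ptil

variable {n m : ℕ} {p t : ℕ → ℕ} {i : ℕ}

lemma Ptil_of_lt (h : p i < t (i+1)) : Ptil n m p t i = p i := by
  rw [Ptil, if_pos h]

lemma Ptil_of_not_cutD (h : t (i+1) ≤ p i) (hcut : ¬ cutD n m p t (t (i+1) - 1)) :
    Ptil n m p t i =
      if t (i+1) = n+1 ∨ t (i+1) = n+2 then 2*n+3 - t (i+1) else t (i+1) := by
  rw [Ptil, if_neg (by omega), if_pos hcut]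

lemma Ptil_of_cutD (h : t (i+1) ≤ p i) (hcut : cutD n m p t (t (i+1) - 1)) :
    Ptil n m p t i = ((Finset.Icc (t i) (t (i+1) - 1)).filter
        (fun c => ¬ LSet (2*n+2) m p t (cutD n m p t) c)).sup id := by
  rw [Ptil, if_neg (by omega), if_neg (not_not.2 hcut)]

lemma Ptil_le_of_cutD (h : t (i+1) ≤ p i) (hcut : cutD n m p t (t (i+1) - 1)) :
    Ptil n m p t i ≤ t (i+1) - 1 := by
  rw [Ptil_of_cutD h hcut]
  exact Finset.sup_le fun x hx => (Finset.mem_Icc.1 (Finset.mem_filter.1 hx).1).2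

lemma le_Ptil_of_cutD (h : t (i+1) ≤ p i) (hcut : cutD n m p t (t (i+1) - 1)) {x : ℕ}
    (hx1 : t i ≤ x) (hx2 : x ≤ t (i+1) - 1) (hx : ¬ LSet (2*n+2) m p t (cutD n m p t) x) :
    x ≤ Ptil n m p t i := by
  rw [Ptil_of_cutD h hcut]
  exact Finset.le_sup (f := id) (Finset.mem_filter.2 ⟨Finset.mem_Icc.2 ⟨hx1, hx2⟩, hx⟩)

lemma Ptil_mem_of_cutD (h : t (i+1) ≤ p i) (hcut : cutD n m p t (t (i+1) - 1))
    (h0 : Ptil n m p t i ≠ 0) :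
    t i ≤ Ptil n m p t i ∧ ¬ LSet (2*n+2) m p t (cutD n m p t) (Ptil n m p t i) := by
  rw [Ptil_of_cutD h hcut] at h0 ⊢
  set s := (Finset.Icc (t i) (t (i+1) - 1)).filter
    (fun c => ¬ LSet (2*n+2) m p t (cutD n m p t) c)
  rcases s.eq_empty_or_nonempty with hs | hs
  · simp [hs] at h0
  obtain ⟨x, hx, hsup⟩ := s.exists_mem_eq_sup hs id
  rw [hsup]
  simp only [s, Finset.mem_filter, Finset.mem_Icc] at hx
  exact ⟨hx.1.1, hx.2⟩

lemma t_le_Ptil (ht : StrictMonoOn t (Set.Iic (m+1))) (hle : leS m t p) (hi1 : 1 ≤ i)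
    (him : i ≤ m) (h0 : Ptil n m p t i ≠ 0) : t i ≤ Ptil n m p t i := by
  by_cases h : p i < t (i+1)
  · rw [Ptil_of_lt h]
    exact hle i hi1 him
  by_cases hcut : cutD n m p t (t (i+1) - 1)
  · exact (Ptil_mem_of_cutD (by omega) hcut h0).1
  have hti : t i < t (i+1) := ht (Set.mem_Iic.2 (by omega)) (Set.mem_Iic.2 (by omega)) (by omega)
  rw [Ptil_of_not_cutD (by omega) hcut]
  split_ifs <;> omega

lemma Ptil_le_t_succ (hn : t (i+1) ≤ n) : Ptil n m p t i ≤ t (i+1) := by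
  by_cases h : p i < t (i+1)
  · rw [Ptil_of_lt h]
    exact h.le
  by_cases hcut : cutD n m p t (t (i+1) - 1)
  · have := Ptil_le_of_cutD (by omega) hcut
    omega
  rw [Ptil_of_not_cutD (by omega) hcut, if_neg (by omega)]

end Ptil

structure WindowConfig (n m : ℕ) (p t : ℕ → ℕ) (c : ℕ) : Prop where
  hp : IsSSym (2*n+2) m p
  ht : IsSSym (2*n+2) m t
  bruhat : bruhatD n m t p
  tD_ne : tD n (symSet m t) ≠ tD n (symSet m p)
  one_le : 1 ≤ c
  le_n : c ≤ n
  not_mem_T : c ∉ brP (2*n+2) (symSet m t)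
  window_P : Finset.Icc (c+1) (n+1) ⊆ brP (2*n+2) (symSet m p)
  window_T : Finset.Icc (c+1) (n+1) ⊆ brP (2*n+2) (symSet m t)

namespace WindowConfig

variable {n m c : ℕ} {p t : ℕ → ℕ}

lemma leS (h : WindowConfig n m p t c) : leS m t p := h.bruhat.1

lemma t_ne (h : WindowConfig n m p t c) {j : ℕ} (hj1 : 1 ≤ j) (hjm : j ≤ m) :
    t j ≠ c ∧ t j ≠ 2*n+3-c := by
  have hc : c ≤ 2*n+2+1 := by have := h.le_n; omega
  exact ⟨fun hj => h.not_mem_T ((mem_brP_symSet_iff h.one_le hc).2 ⟨j, hj1, hjm, Or.inl hj⟩),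
    fun hj => h.not_mem_T ((mem_brP_symSet_iff h.one_le hc).2 ⟨j, hj1, hjm, Or.inr (by omega)⟩)⟩

lemma countLE_lt (h : WindowConfig n m p t c) {x : ℕ} (hx : c ≤ x) (hxn : x ≤ n) :
    countLE m p x < countLE m t x := by
  refine (countLE_le_countLE_of_leS h.leS).lt_of_ne fun heq => h.tD_ne ?_
  refine (h.bruhat.2 x (by have := h.one_le; omega) hxn
    ((Finset.Icc_subset_Icc (by omega) le_rfl).trans h.window_P)
    ((Finset.Icc_subset_Icc (by omega) le_rfl).trans h.window_T) ?_).symm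
  rw [card_symSet_inter_Icc h.hp.strictMonoOn, card_symSet_inter_Icc h.ht.strictMonoOn, heq]

lemma not_visCut (h : WindowConfig n m p t c) {x : ℕ} (hx : countLE m p x < countLE m t x) :
    ¬ visCut m p t x :=
  fun hv => hx.ne (countLE_eq_of_visCut h.hp h.ht h.leS hv)

lemma not_excCut (h : WindowConfig n m p t c) {x : ℕ} (hx : x < c ∨ 2*n+2-c < x) :
    ¬ excCut n m p t x := by
  have := h.le_n
  rintro (⟨-, hxn⟩ | ⟨-, d, ⟨-, hdn, -, hwin, -⟩, hxd⟩)
  · omega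
  · exact h.not_mem_T (hwin (Finset.mem_Icc.2 ⟨by omega, by omega⟩))

lemma cutD_of_countLE_eq (h : WindowConfig n m p t c) {x y : ℕ} (hx : c ≤ x) (hxn : x ≤ n)
    (hcnt : countLE m t x = countLE m p x + 1) (hy : y = x ∨ y = 2*n+2-x) : cutD n m p t y := by
  refine Or.inr (Or.inr ⟨h.tD_ne, x, ⟨by have := h.one_le; omega, hxn,
    (Finset.Icc_subset_Icc (by omega) le_rfl).trans h.window_P,
    (Finset.Icc_subset_Icc (by omega) le_rfl).trans h.window_T, ?_⟩, hy⟩)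
  rw [card_symSet_inter_Icc h.hp.strictMonoOn, card_symSet_inter_Icc h.ht.strictMonoOn, hcnt]

lemma countLE_reflect_t (h : WindowConfig n m p t c) :
    countLE m t (2*n+2-c) = countLE m t c + (n+1-c) :=
  countLE_reflect h.ht h.le_n h.window_T

lemma one_le_countLE (h : WindowConfig n m p t c) : 1 ≤ countLE m t c := by
  have := h.countLE_lt le_rfl h.le_n
  omega

lemma t_countLE_lt (h : WindowConfig n m p t c) : t (countLE m t c) < c :=
  (p_countLE_le h.ht.strictMonoOn h.one_le_countLE).lt_of_ne
    (h.t_ne h.one_le_countLE (countLE_le c)).1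

lemma lt_t_countLE_succ (h : WindowConfig n m p t c) : c < t (countLE m t c + 1) :=
  lt_p_countLE_succ h.ht.strictMonoOn (by rw [h.ht.top]; have := h.le_n; omega)

lemma lt_p_countLE (h : WindowConfig n m p t c) : c < p (countLE m t c) := by
  by_contra! hp
  have := (le_countLE_iff h.hp.strictMonoOn h.one_le_countLE (countLE_le c)).2 hp
  have := h.countLE_lt le_rfl h.le_n
  omega

lemma le_t_countLE_reflect_succ (h : WindowConfig n m p t c) :
    2*n+4-c ≤ t (countLE m t (2*n+2-c) + 1) := by
  have hlt := lt_p_countLE_succ h.ht.strictMonoOn (d := 2*n+2-c) (by rw [h.ht.top]; omega)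
  have hle := countLE_le (m := m) (p := t) (2*n+2-c)
  rcases Nat.lt_or_ge (countLE m t (2*n+2-c)) m with hm | hm
  · have := (h.t_ne (j := countLE m t (2*n+2-c) + 1) (by omega) hm).2
    omega
  · rw [show countLE m t (2*n+2-c) + 1 = m+1 by omega, h.ht.top]
    have := h.one_le
    omega

lemma lt_p_countLE_reflect (h : WindowConfig n m p t c) :
    2*n+2-c < p (countLE m t (2*n+2-c)) := by
  by_contra! hp
  have hA := h.countLE_reflect_t
  have := (le_countLE_iff h.hp.strictMonoOn (by have := h.one_le_countLE; omega)
    (countLE_le _)).2 hp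
  have := countLE_reflect h.hp h.le_n h.window_P
  have := h.countLE_lt le_rfl h.le_n
  omega

lemma countLE_lt_of_reflect_le (h : WindowConfig n m p t c) {x : ℕ} (hx : 2*n+2-c ≤ x)
    (hxp : x < p (countLE m t (2*n+2-c))) : countLE m p x < countLE m t x := by
  have hA2 : 1 ≤ countLE m t (2*n+2-c) := by
    have := h.one_le_countLE; have := h.countLE_reflect_t; omega
  have hlt : countLE m p x < countLE m t (2*n+2-c) := by
    by_contra! hge
    have := (le_countLE_iff h.hp.strictMonoOn hA2 (countLE_le _)).1 hge
    omega
  exact hlt.trans_le (countLE_mono hx)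

lemma countLE_pred_lt (h : WindowConfig n m p t c) :
    countLE m p (c-1) < countLE m t (c-1) := by
  have h1 := (le_countLE_iff h.ht.strictMonoOn h.one_le_countLE (countLE_le c)).2
    (show t (countLE m t c) ≤ c-1 by have := h.t_countLE_lt; omega)
  have h2 := countLE_mono (m := m) (p := p) (show c-1 ≤ c by omega)
  have := h.countLE_lt le_rfl h.le_n
  omega

lemma not_cutD_reflect (h : WindowConfig n m p t c)
    (hp : 2*n+4-c ≤ p (countLE m t (2*n+2-c))) : ¬ cutD n m p t (2*n+3-c) := by
  have hcn := h.le_n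
  have hc1 := h.one_le
  rintro ((hv | hv) | hexc)
  · exact h.not_visCut (h.countLE_lt_of_reflect_le (by omega) (by omega)) hv
  · rw [show 2*n+2-(2*n+3-c) = c-1 by omega] at hv
    exact h.not_visCut h.countLE_pred_lt hv
  · exact h.not_excCut (Or.inr (by omega)) hexc

lemma not_LSet (h : WindowConfig n m p t c) (hp : 2*n+5-c ≤ p (countLE m t (2*n+2-c))) :
    ¬ LSet (2*n+2) m p t (cutD n m p t) (2*n+4-c) := by
  have hcn := h.le_n
  have hc1 := h.one_le
  rintro ⟨-, -, ⟨j, hj, hpj, htj⟩ | ⟨j, hj1, hjm, htj, hpj, hstar⟩⟩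
  · exact h.not_visCut (h.countLE_lt_of_reflect_le (by omega) (by omega)) ⟨j, hj, hpj.le, htj⟩
  rw [show 2*n+2+1-(2*n+4-c) = c-1 by omega] at htj hpj hstar
  rcases hstar with ⟨-, hcut⟩ | ⟨hpj, hcut⟩
  · rcases hcut with (hv | hv) | hexc
    · exact h.not_visCut h.countLE_pred_lt hv
    · rw [show 2*n+2-(c-1) = 2*n+3-c by omega] at hv
      exact h.not_visCut (h.countLE_lt_of_reflect_le (by omega) (by omega)) hv
    · exact h.not_excCut (Or.inl (by omega)) hexc
  · have hpos : 0 < p j := by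
      have := h.hp.strictMonoOn (Set.mem_Iic.2 (Nat.zero_le _))
        (Set.mem_Iic.2 (show j ≤ m+1 by omega)) (by omega)
      omega
    rw [show c-1-1 = c-2 by omega] at hcut
    have hlt : countLE m p (c-2) < countLE m t (c-2) := by
      have hj_le := (le_countLE_iff h.hp.strictMonoOn hj1 hjm (d := c-1)).2 (by omega)
      have hj_gt : ¬ j ≤ countLE m p (c-2) := fun hj' =>
        absurd ((le_countLE_iff h.hp.strictMonoOn hj1 hjm).1 hj') (by omega)
      have := countLE_succ_le h.ht.strictMonoOn (m := m) (c-2)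
      rw [show c-2+1 = c-1 by omega] at this
      have := h.countLE_pred_lt
      omega
    rcases hcut with (hv | hv) | hexc
    · exact h.not_visCut hlt hv
    · rw [show 2*n+2-(c-2) = 2*n+4-c by omega] at hv
      exact h.not_visCut (h.countLE_lt_of_reflect_le (by omega) (by omega)) hv
    · exact h.not_excCut (Or.inl (by omega)) hexc

lemma mem_Icc_of_Ptil_mem (h : WindowConfig n m p t c) {j : ℕ} (hj1 : 1 ≤ j) (hjm : j ≤ m)
    (hc : c ≤ Ptil n m p t j) (hc' : Ptil n m p t j ≤ 2*n+3-c) :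
    j ∈ Finset.Icc (countLE m t c) (countLE m t (2*n+2-c)) := by
  have hcn := h.le_n
  have hc1 := h.one_le
  refine Finset.mem_Icc.2 ⟨?_, ?_⟩
  · by_contra! hj
    have hjm' : j+1 ≤ m := hj.trans_le (countLE_le c)
    have htj : t (j+1) ≤ c := (le_countLE_iff h.ht.strictMonoOn (by omega) hjm').1 hj
    have := (h.t_ne (j := j+1) (by omega) hjm').1
    have := Ptil_le_t_succ (m := m) (p := p) (i := j) (show t (j+1) ≤ n by omega)
    omega
  · by_contra! hj
    have htj : 2*n+2-c < t j := by
      by_contra! htj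
      have := (le_countLE_iff h.ht.strictMonoOn hj1 hjm).2 htj
      omega
    have := (h.t_ne hj1 hjm).2
    have := t_le_Ptil h.ht.strictMonoOn h.leS hj1 hjm (n := n) (by omega)
    omega

/-- `min v (N+1-v)` is the index `e ≤ n+1` of the column pair `{e, N+1-e}` containing `v`. -/
lemma mapsTo_injOn_fold_Ptil (h : WindowConfig n m p t c)
    (hwin : Finset.Icc c (n+1) ⊆ brP (2*n+2) (symSet m (Ptil n m p t))) :
    Set.MapsTo (fun j => min (Ptil n m p t j) (2*n+3 - Ptil n m p t j))
        (Finset.Icc (countLE m t c) (countLE m t (2*n+2-c))) (Finset.Icc c (n+1)) ∧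
      Set.InjOn (fun j => min (Ptil n m p t j) (2*n+3 - Ptil n m p t j))
        (Finset.Icc (countLE m t c) (countLE m t (2*n+2-c))) := by
  apply mapsTo_injOn_of_subset_image
  · intro e he
    have he' := Finset.mem_Icc.1 he
    obtain ⟨j, hj1, hjm, hj⟩ :=
      (mem_brP_symSet_iff (by have := h.one_le; omega) (by omega)).1 (hwin he)
    exact Finset.mem_image.2 ⟨j, h.mem_Icc_of_Ptil_mem hj1 hjm (by omega) (by omega), by omega⟩
  · simp only [Nat.card_Icc, h.countLE_reflect_t]
    have := h.le_n
    omega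

lemma Ptil_countLE_reflect_eq (h : WindowConfig n m p t c)
    (hPtil : Ptil n m p t (countLE m t (2*n+2-c)) ≤ 2*n+3-c) :
    Ptil n m p t (countLE m t (2*n+2-c)) = 2*n+3-c ∧ p (countLE m t (2*n+2-c)) = 2*n+3-c := by
  have hpA₂ := h.lt_p_countLE_reflect
  have htA₂ := h.le_t_countLE_reflect_succ
  have htA₂' : t (countLE m t (2*n+2-c)) ≤ 2*n+2-c := p_countLE_le h.ht.strictMonoOn
    (by have := h.one_le_countLE; have := h.countLE_reflect_t; omega)
  have hcn := h.le_n
  by_cases hb : p (countLE m t (2*n+2-c)) < t (countLE m t (2*n+2-c) + 1)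
  · rw [Ptil_of_lt hb] at hPtil ⊢
    omega
  by_cases hcut : cutD n m p t (t (countLE m t (2*n+2-c) + 1) - 1)
  · exfalso
    rcases (show t (countLE m t (2*n+2-c) + 1) = 2*n+4-c ∨
        2*n+5-c ≤ t (countLE m t (2*n+2-c) + 1) by omega) with heq | hgt
    · rw [heq, show 2*n+4-c-1 = 2*n+3-c by omega] at hcut
      exact h.not_cutD_reflect (by omega) hcut
    · have := le_Ptil_of_cutD (by omega) hcut (x := 2*n+4-c) (by omega) (by omega)
        (h.not_LSet (by omega))
      omega
  · rw [Ptil_of_not_cutD (by omega) hcut, if_neg (by omega)] at hPtil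
    omega

lemma countLE_eq_succ_of_p_eq (h : WindowConfig n m p t c)
    (hpA₂ : p (countLE m t (2*n+2-c)) = 2*n+3-c) : countLE m t c = countLE m p c + 1 := by
  have hlt := h.countLE_lt le_rfl h.le_n
  have hrp := countLE_reflect h.hp h.le_n h.window_P
  have hrt := h.countLE_reflect_t
  by_contra hne
  have hm := countLE_le (m := m) (p := t) (2*n+2-c)
  have h1 := lt_p_countLE_succ h.hp.strictMonoOn (m := m) (d := 2*n+2-c)
    (by rw [h.hp.top]; omega)
  have h2 := h.hp.strictMonoOn (Set.mem_Iic.2 (show countLE m p (2*n+2-c) + 1 ≤ m+1 by omega))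
    (Set.mem_Iic.2 (show countLE m t (2*n+2-c) ≤ m+1 by omega)) (by omega)
  omega

lemma exists_t_eq_of_mem_window (h : WindowConfig n m p t c) {e : ℕ} (he : c+1 ≤ e)
    (hen : e ≤ n+1) : ∃ k, countLE m t c < k ∧ k ≤ m ∧ (t k = e ∨ t k = 2*n+3-e) ∧
      t (countLE m t c + 1) ≤ t k := by
  obtain ⟨k, hk1, hkm, hk⟩ :=
    (mem_brP_symSet_iff (by omega) (by omega)).1 (h.window_T (Finset.mem_Icc.2 ⟨he, hen⟩))
  have hAk : countLE m t c < k := by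
    by_contra! hkA
    have := (le_countLE_iff h.ht.strictMonoOn hk1 hkm).1 hkA
    omega
  exact ⟨k, hAk, hkm, by omega,
    (h.ht.strictMonoOn.le_iff_le (Set.mem_Iic.2 (by omega)) (Set.mem_Iic.2 (by omega))).2 hAk⟩

lemma t_countLE_succ_le_p (h : WindowConfig n m p t c) :
    t (countLE m t c + 1) ≤ p (countLE m t c) := by
  by_contra! hlt
  obtain ⟨k, hAk, hkm, hk, htk⟩ := h.exists_t_eq_of_mem_window (e := n+1)
    (by have := h.le_n; omega) le_rfl
  have hA1 := h.one_le_countLE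
  have hAm : countLE m t c + 1 ≤ m := by omega
  have hpA := h.lt_p_countLE
  have htA := h.t_countLE_lt
  have hcp : countLE m p (p (countLE m t c)) = countLE m t c :=
    countLE_eq h.hp.strictMonoOn (countLE_le c) (fun _ => le_rfl)
      (hlt.trans_le (h.leS _ (by omega) hAm))
  have hct : countLE m t (p (countLE m t c)) = countLE m t c :=
    countLE_eq h.ht.strictMonoOn (countLE_le c) (fun _ => by omega) hlt
  rcases (show p (countLE m t c) ≤ n ∨ p (countLE m t c) = n+1 by omega) with hpn | hpn
  · have := h.countLE_lt hpA.le hpn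
    omega
  · refine h.tD_ne (tD_eq_of_countLE_eq h.ht.strictMonoOn h.hp.strictMonoOn ?_ ?_
      (by rw [← hpn, hct, hcp]))
    · exact Or.inr (Finset.mem_image.2
        ⟨countLE m t c + 1, Finset.mem_Icc.2 ⟨by omega, hAm⟩, by omega⟩)
    · exact Or.inl (Finset.mem_image.2
        ⟨countLE m t c, Finset.mem_Icc.2 ⟨hA1, countLE_le c⟩, hpn⟩)

lemma cutD_of_lt_t_countLE_succ (h : WindowConfig n m p t c)
    (hA : countLE m t c = countLE m p c + 1) {x y : ℕ} (hx : c ≤ x) (hxn : x ≤ n)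
    (hxt : x < t (countLE m t c + 1)) (hy : y = x ∨ y = 2*n+2-x) : cutD n m p t y := by
  have hct : countLE m t x = countLE m t c :=
    countLE_eq h.ht.strictMonoOn (countLE_le c) (fun _ => by have := h.t_countLE_lt; omega) hxt
  have := countLE_mono (m := m) (p := p) hx
  have := h.countLE_lt hx hxn
  exact h.cutD_of_countLE_eq hx hxn (by omega) hy

lemma Ptil_countLE_ne_of_cutD (h : WindowConfig n m p t c)
    (hA : countLE m t c = countLE m p c + 1)
    (hcut : cutD n m p t (t (countLE m t c + 1) - 1)) {e : ℕ} (he : c+1 ≤ e) (hen : e ≤ n+1) :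
    Ptil n m p t (countLE m t c) ≠ e ∧ Ptil n m p t (countLE m t c) ≠ 2*n+3-e := by
  have hb := h.t_countLE_succ_le_p
  have hle := Ptil_le_of_cutD hb hcut
  obtain ⟨k, hAk, hkm, hk, htk⟩ := h.exists_t_eq_of_mem_window he hen
  obtain ⟨k', -, -, hk', htk'⟩ := h.exists_t_eq_of_mem_window (e := n+1) (by omega) le_rfl
  refine ⟨fun hPe => ?_, fun hPe => by omega⟩
  -- `t_k = N+1-e` gives a lone star in column `N+1-e`, whose cut `N-(e-1)` is exceptional
  apply (Ptil_mem_of_cutD hb hcut (by omega)).2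
  have := h.leS k (by omega) hkm
  rw [hPe]
  refine ⟨by omega, by omega, Or.inr ⟨k, by omega, hkm, by omega, by omega, Or.inl ⟨by omega, ?_⟩⟩⟩
  exact h.cutD_of_lt_t_countLE_succ hA (x := e-1) (by omega) (by omega) (by omega)
    (Or.inr (by omega))

lemma Ptil_countLE_ne_of_not_cutD (h : WindowConfig n m p t c)
    (hA : countLE m t c = countLE m p c + 1) (hpA₂ : p (countLE m t (2*n+2-c)) ≤ 2*n+3-c)
    (hcut : ¬ cutD n m p t (t (countLE m t c + 1) - 1)) {e : ℕ} (hen : e ≤ n+1) :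
    Ptil n m p t (countLE m t c) ≠ e ∧ Ptil n m p t (countLE m t c) ≠ 2*n+3-e := by
  have hb := h.t_countLE_succ_le_p
  have hcn := h.le_n
  have hct := h.lt_t_countLE_succ
  obtain ⟨k, -, -, hk, htk⟩ := h.exists_t_eq_of_mem_window (e := n+1) (by omega) le_rfl
  rcases (show t (countLE m t c + 1) = n+1 ∨ t (countLE m t c + 1) = n+2 ∨
      t (countLE m t c + 1) ≤ n by omega) with h1 | h2 | hsmall
  · exact absurd (h.cutD_of_lt_t_countLE_succ hA (x := n) hcn le_rfl (by omega)
      (Or.inl (by omega))) hcut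
  · exfalso
    rcases (show p (countLE m t c) = n+2 ∨ n+3 ≤ p (countLE m t c) by omega) with hp | hp
    · exact hcut (Or.inr (Or.inl ⟨⟨countLE m t c, h.one_le_countLE, countLE_le c,
        Or.inl ⟨hp, by omega⟩⟩, by omega⟩))
    · -- `p` rises by at least one per row, so `p_{A₂} ≥ p_A + (n+1-c) > N+1-c`
      have hA₂ := h.countLE_reflect_t
      have := h.hp.strictMonoOn.add_sub_le (i := countLE m t c) (j := countLE m t (2*n+2-c))
        (by omega) (by have := countLE_le (m := m) (p := t) (2*n+2-c); omega)
      omega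
  · rw [Ptil_of_not_cutD hb hcut, if_neg (by omega)]
    refine ⟨fun hPe => hcut ?_, by omega⟩
    exact h.cutD_of_lt_t_countLE_succ hA (x := e-1) (by omega) (by omega) (by omega)
      (Or.inl (by omega))

lemma Ptil_countLE_ne (h : WindowConfig n m p t c) (hA : countLE m t c = countLE m p c + 1)
    (hpA₂ : p (countLE m t (2*n+2-c)) ≤ 2*n+3-c) {e : ℕ} (he : c+1 ≤ e) (hen : e ≤ n+1) :
    Ptil n m p t (countLE m t c) ≠ e ∧ Ptil n m p t (countLE m t c) ≠ 2*n+3-e := by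
  by_cases hcut : cutD n m p t (t (countLE m t c + 1) - 1)
  · exact h.Ptil_countLE_ne_of_cutD hA hcut he hen
  · exact h.Ptil_countLE_ne_of_not_cutD hA hpA₂ hcut hen

end WindowConfig

/-- (type D) Suppose `T ⪯ P` with `t(T) ≠ t(P)`, and `c ∈ [1,n]`
satisfies `c ∉ [T]` and `[c+1,n+1] ⊆ [P] ∩ [T] ∩ [P̃]` where `P̃` is the modified
type-D construction. Then `c ∉ [P] ∩ [P̃]`. -/
theorem stmt_14 (n m : ℕ) (p t : ℕ → ℕ)
    (hp : IsSSym (2*n+2) m p) (ht : IsSSym (2*n+2) m t)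
    (hb : bruhatD n m t p)
    (htype : tD n (symSet m t) ≠ tD n (symSet m p))
    (c : ℕ) (hc1 : 1 ≤ c) (hcn : c ≤ n)
    (hcT : c ∉ brP (2*n+2) (symSet m t))
    (hsub : Finset.Icc (c+1) (n+1) ⊆
       brP (2*n+2) (symSet m p) ∩ brP (2*n+2) (symSet m t) ∩
         brP (2*n+2) (symSet m (Ptil n m p t))) :
    c ∉ brP (2*n+2) (symSet m p) ∩ brP (2*n+2) (symSet m (Ptil n m p t)) := by
  intro hmem
  have h : WindowConfig n m p t c := ⟨hp, ht, hb, htype, hc1, hcn, hcT,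
    fun x hx => (Finset.mem_inter.1 (Finset.mem_inter.1 (hsub hx)).1).1,
    fun x hx => (Finset.mem_inter.1 (Finset.mem_inter.1 (hsub hx)).1).2⟩
  have hwin : Finset.Icc c (n+1) ⊆ brP (2*n+2) (symSet m (Ptil n m p t)) := by
    intro x hx
    rcases (Finset.mem_Icc.1 hx).1.eq_or_lt with rfl | hlt
    · exact (Finset.mem_inter.1 hmem).2
    · exact (Finset.mem_inter.1 (hsub (Finset.mem_Icc.2 ⟨hlt, (Finset.mem_Icc.1 hx).2⟩))).2
  obtain ⟨hmaps, hinj⟩ := h.mapsTo_injOn_fold_Ptil hwin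
  have hAA₂ : countLE m t c < countLE m t (2*n+2-c) := by
    have := h.countLE_reflect_t
    omega
  have hA := Finset.left_mem_Icc.2 hAA₂.le
  have hA₂ := Finset.right_mem_Icc.2 hAA₂.le
  have hfoldA := Finset.mem_Icc.1 (hmaps hA)
  have hfoldA₂ := Finset.mem_Icc.1 (hmaps hA₂)
  have hne := mt (hinj hA hA₂) hAA₂.ne
  beta_reduce at hfoldA hfoldA₂ hne
  obtain ⟨hPA₂, hpA₂⟩ := h.Ptil_countLE_reflect_eq (by omega)
  have := h.Ptil_countLE_ne (h.countLE_eq_succ_of_p_eq hpA₂) hpA₂.le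
    (e := min (Ptil n m p t (countLE m t c)) (2*n+3 - Ptil n m p t (countLE m t c)))
    (by omega) hfoldA.2
  omega
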